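/- arXiv:1202.2659 — 5 statements merged into one kernel-verified Lean document; each statement's English description precedes it below -/
import Mathlib

section
/- Let R be a rational map of degree d ≥ 2 on the Riemann sphere and let A be a finite nonempty subset of the sphere such that every non-critical preimage of a point of A lies in A, i.e. R⁻¹(A) \ Crit(R) ⊆ A, where Crit(R) is the set of critical points of R. Then A contains at most 4 elements, and at most 3 elements if A contains a critical point of R. -/
open scoped Classical

noncomputable section

/-- The Riemann sphere `ℂ∞`, modelled as the one-point compactification of `ℂ`. -/
abbrev Sphere : Type := OnePoint ℂ

/-- Abstract data of a rational map of degree at least 2 on the Riemann sphere `ℂ∞`,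
recorded together with its local valency function `val` and the basic analytic facts:
the map is a continuous open finite-to-one surjection, for every `y` one has
`∑_{x ∈ R⁻¹(y)} val(R,x) = deg R` and the Riemann–Hurwitz identity
`∑_x (val(R,x) − 1) = 2 deg R − 2`. -/
structure RationalMap where
  toFun : Sphere → Sphere
  deg : ℕ
  two_le_deg : 2 ≤ deg
  /-- `val x` is the local valency (multiplicity) of the map at `x`. -/
  val : Sphere → ℕ
  one_le_val : ∀ x, 1 ≤ val x
  continuous_toFun : Continuous toFun
  isOpenMap_toFun : IsOpenMap toFun
  surjective_toFun : Function.Surjective toFun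
  finite_fiber : ∀ y, (toFun ⁻¹' {y}).Finite
  crit_finite : {x | 2 ≤ val x}.Finite
  val_sum : ∀ y, ∑ x ∈ (finite_fiber y).toFinset, val x = deg
  riemann_hurwitz : ∑ x ∈ crit_finite.toFinset, (val x - 1) = 2 * deg - 2

namespace RationalMap

variable (R : RationalMap)

/-- The set of critical points of `R` (points of valency at least `2`). -/
def Crit : Set Sphere := {x | 2 ≤ R.val x}

/-- The local valency `val(Rⁿ, x)` of the `n`-th iterate of `R` at `x`, computed by the
chain rule for valencies: `val(Rⁿ,x) = ∏_{j<n} val(R, Rʲ(x))`. -/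
def valIter (n : ℕ) (x : Sphere) : ℕ :=
  ∏ j ∈ Finset.range n, R.val (R.toFun^[j] x)

/-- The restricted orbit `RO(x)` of a point `x`:
`RO(x) = { y : Rⁿ(y) = Rᵐ(x) and val(Rⁿ,y) = val(Rᵐ,x) for some n,m ∈ ℕ }`. -/
def RO (x : Sphere) : Set Sphere :=
  {y | ∃ n m : ℕ, R.toFun^[n] y = R.toFun^[m] x ∧ R.valIter n y = R.valIter m x}

/-- A set `Y` is `RO`-invariant when `x ∈ Y` implies `RO(x) ⊆ Y`. -/
def ROInvariant (Y : Set Sphere) : Prop := ∀ x ∈ Y, R.RO x ⊆ Y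

/-- The full orbit of `x`. -/
def Orb (x : Sphere) : Set Sphere :=
  {y | ∃ n m : ℕ, R.toFun^[n] x = R.toFun^[m] y}

/-- `x` is a periodic point of `R`. -/
def Periodic (x : Sphere) : Prop := ∃ p : ℕ, 0 < p ∧ R.toFun^[p] x = x

/-- `x` is pre-periodic: some forward iterate of `x` is periodic. -/
def PrePeriodic (x : Sphere) : Prop := ∃ n : ℕ, R.Periodic (R.toFun^[n] x)

/-- `x` is pre-critical: some forward iterate of `x` (including `x` itself) is critical. -/
def PreCritical (x : Sphere) : Prop := ∃ n : ℕ, R.toFun^[n] x ∈ R.Crit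

end RationalMap

/-- `x` is an isolated point of the set `Y`. -/
def IsIsolatedIn (x : Sphere) (Y : Set Sphere) : Prop :=
  ∃ U : Set Sphere, IsOpen U ∧ U ∩ Y = {x}

/-- A nonempty closed `RO`-invariant set `Y` is prime when `Y ⊆ B ∪ C` for closed
`RO`-invariant sets `B`, `C` implies `Y ⊆ B` or `Y ⊆ C`. -/
def RationalMap.IsPrimeSet (R : RationalMap) (Y : Set Sphere) : Prop :=
  Y.Nonempty ∧ IsClosed Y ∧ R.ROInvariant Y ∧
    ∀ B C : Set Sphere, IsClosed B → IsClosed C → R.ROInvariant B → R.ROInvariant C →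
      Y ⊆ B ∪ C → Y ⊆ B ∨ Y ⊆ C

/-- If `R` is a rational map of degree at least 2 and `A` is a finite nonempty
subset of the sphere with `R⁻¹(A) \ Crit(R) ⊆ A`, then `#A ≤ 4`, and `#A ≤ 3` if `A`
contains a critical point. -/
theorem stmt_0 (R : RationalMap) (A : Set Sphere) (hfin : A.Finite) (hne : A.Nonempty)
    (hA : R.toFun ⁻¹' A \ R.Crit ⊆ A) :
    A.ncard ≤ 4 ∧ ((A ∩ R.Crit).Nonempty → A.ncard ≤ 3) := by
  classical
  set d := R.deg with hd
  have hd2 : 2 ≤ d := R.two_le_deg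
  set F := hfin.toFinset with hF
  set C := R.crit_finite.toFinset with hC
  set S : Finset Sphere := F.biUnion (fun y => (R.finite_fiber y).toFinset) with hS
  have hmemS : ∀ x, x ∈ S ↔ R.toFun x ∈ A := by
    intro x
    simp only [hS, Finset.mem_biUnion, hF, Set.Finite.mem_toFinset, Set.mem_preimage,
      Set.mem_singleton_iff]
    constructor
    · rintro ⟨y, hy, rfl⟩; exact hy
    · intro h; exact ⟨R.toFun x, h, rfl⟩
  -- total valency sum over S
  have hsum : ∑ x ∈ S, R.val x = F.card * d := by
    rw [hS, Finset.sum_biUnion]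
    · rw [Finset.sum_congr rfl (fun y _ => R.val_sum y), Finset.sum_const, smul_eq_mul]
    · intro y hy z hz hyz
      simp only [Finset.disjoint_left, Set.Finite.mem_toFinset, Set.mem_preimage,
        Set.mem_singleton_iff]
      intro a ha hb
      exact hyz (ha ▸ hb)
  -- split sum
  have hsplit : ∑ x ∈ S, R.val x = S.card + ∑ x ∈ S, (R.val x - 1) := by
    rw [Finset.card_eq_sum_ones, ← Finset.sum_add_distrib]
    refine Finset.sum_congr rfl ?_
    intro x _
    have := R.one_le_val x
    omega
  -- critical sum bound
  have hcritsum : ∑ x ∈ S, (R.val x - 1) ≤ ∑ x ∈ C, (R.val x - 1) := by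
    apply Finset.sum_le_sum_of_ne_zero
    intro x _ hx
    simp only [hC, Set.Finite.mem_toFinset, Set.mem_setOf_eq]
    have := R.one_le_val x
    omega
  have hRH : ∑ x ∈ C, (R.val x - 1) = 2 * d - 2 := R.riemann_hurwitz
  -- S ⊆ F ∪ (C \ F)
  have hSsub : S ⊆ F ∪ (C \ F) := by
    intro x hx
    rw [hmemS] at hx
    by_cases hxF : x ∈ F
    · exact Finset.mem_union_left _ hxF
    · have hxC : x ∈ C := by
        by_contra hxC
        apply hxF
        rw [hF, Set.Finite.mem_toFinset]
        apply hA
        constructor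
        · exact hx
        · intro h
          exact hxC (by rwa [hC, Set.Finite.mem_toFinset])
      exact Finset.mem_union_right _ (Finset.mem_sdiff.2 ⟨hxC, hxF⟩)
  have hScard : S.card ≤ F.card + (C \ F).card :=
    le_trans (Finset.card_le_card hSsub) (Finset.card_union_le _ _)
  -- card of C \ F bounded by sum
  have hCF : (C \ F).card ≤ ∑ x ∈ C \ F, (R.val x - 1) := by
    rw [Finset.card_eq_sum_ones]
    apply Finset.sum_le_sum
    intro x hx
    have hxC : x ∈ C := (Finset.mem_sdiff.1 hx).1
    rw [hC, Set.Finite.mem_toFinset, Set.mem_setOf_eq] at hxC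
    omega
  have hCFsub : ∑ x ∈ C \ F, (R.val x - 1) ≤ 2 * d - 2 := by
    rw [← hRH]
    exact Finset.sum_le_sum_of_subset (Finset.sdiff_subset)
  have hAcard : A.ncard = F.card := by
    rw [hF]; exact (Set.ncard_eq_toFinset_card A hfin)
  have hkey : F.card * d ≤ F.card + (C \ F).card + (2 * d - 2) := by
    calc F.card * d = ∑ x ∈ S, R.val x := hsum.symm
      _ = S.card + ∑ x ∈ S, (R.val x - 1) := hsplit
      _ ≤ (F.card + (C \ F).card) + (2 * d - 2) := by
          have := hcritsum.trans_eq hRH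
          omega
  constructor
  · -- #A ≤ 4
    have h1 : (C \ F).card ≤ 2 * d - 2 := hCF.trans hCFsub
    obtain ⟨e, he1, he2⟩ : ∃ e, 1 ≤ e ∧ d = e + 1 := ⟨d - 1, by omega, by omega⟩
    have h4 : 2 * d - 2 = 2 * e := by omega
    have h5 : F.card * d ≤ F.card + (2 * e) + (2 * e) := by omega
    rw [he2, Nat.mul_add, Nat.mul_one] at h5
    have h6 : F.card * e ≤ 4 * e := by linarith
    rw [hAcard]
    exact Nat.le_of_mul_le_mul_right h6 (by omega)
  · rintro ⟨x₀, hx₀A, hx₀C⟩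
    have hx₀F : x₀ ∈ F := by rw [hF, Set.Finite.mem_toFinset]; exact hx₀A
    have hx₀Cf : x₀ ∈ C := by rw [hC, Set.Finite.mem_toFinset]; exact hx₀C
    have hval₀ : 1 ≤ R.val x₀ - 1 := by
      have : 2 ≤ R.val x₀ := hx₀C
      omega
    -- stronger bound: sum over C \ F plus (val x₀ - 1) ≤ 2d - 2
    have hins : ∑ x ∈ insert x₀ (C \ F), (R.val x - 1) ≤ 2 * d - 2 := by
      rw [← hRH]
      apply Finset.sum_le_sum_of_subset
      intro x hx
      rcases Finset.mem_insert.1 hx with rfl | hx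
      · exact hx₀Cf
      · exact Finset.sdiff_subset hx
    have hx₀notin : x₀ ∉ C \ F := fun h => (Finset.mem_sdiff.1 h).2 hx₀F
    rw [Finset.sum_insert hx₀notin] at hins
    have h2 : (C \ F).card + 1 ≤ 2 * d - 2 := by
      have := hCF
      omega
    obtain ⟨e, he1, he2⟩ : ∃ e, 1 ≤ e ∧ d = e + 1 := ⟨d - 1, by omega, by omega⟩
    have h5 : F.card * d + 1 ≤ F.card + (2 * e) + (2 * e) := by omega
    rw [he2, Nat.mul_add, Nat.mul_one] at h5
    have h6 : F.card * e < 4 * e := by linarith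
    rw [hAcard]
    have := Nat.lt_of_mul_lt_mul_right h6
    omega
end
end

section
/- Let R be a polynomial of degree d ≥ 2 viewed as a map of the Riemann sphere, and let A ⊆ ℂ be a finite nonempty subset of the plane satisfying R⁻¹(A) \ Crit(R) ⊆ A. Then #A ≤ 2, and #A ≤ 1 if A contains a critical point of R. -/
open scoped Classical

noncomputable section

open OnePoint in
/-- If `R` is a polynomial of degree `d ≥ 2` (regarded as a rational map on the
Riemann sphere with `∞` a fixed critical point of valency `d`) and `A ⊆ ℂ` is a finite
nonempty subset of the plane with `R⁻¹(A) \ Crit(R) ⊆ A`, then `#A ≤ 2`, and `#A ≤ 1`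
if `A` contains a critical point. -/
theorem stmt_1 (R : RationalMap)
    (hfix : R.toFun (OnePoint.infty : Sphere) = OnePoint.infty)
    (hvalinf : R.val (OnePoint.infty : Sphere) = R.deg)
    (A : Set Sphere) (hplane : (OnePoint.infty : Sphere) ∉ A)
    (hfin : A.Finite) (hne : A.Nonempty)
    (hA : R.toFun ⁻¹' A \ R.Crit ⊆ A) :
    A.ncard ≤ 2 ∧ ((A ∩ R.Crit).Nonempty → A.ncard ≤ 1) := by
    classical
  have hd2 : 2 ≤ R.deg := R.two_le_deg
  set d := R.deg with hdd
  set Af := hfin.toFinset with hAfdef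
  have hmemA : ∀ x : Sphere, x ∈ Af ↔ x ∈ A := fun x => hfin.mem_toFinset
  set K := R.crit_finite.toFinset with hKdef
  have hmemK : ∀ x : Sphere, x ∈ K ↔ 2 ≤ R.val x := fun x => R.crit_finite.mem_toFinset
  set F : Sphere → Finset Sphere := fun y => (R.finite_fiber y).toFinset with hFdef
  have hmemF : ∀ y x : Sphere, x ∈ F y ↔ R.toFun x = y := by
    intro y x
    simp [hFdef, Set.Finite.mem_toFinset]
  -- per-fiber counting: card + ramification = d
  have hcardval : ∀ y : Sphere, (F y).card + ∑ x ∈ F y ∩ K, (R.val x - 1) = d := by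
    intro y
    have h1 : ∑ x ∈ F y, R.val x = d := R.val_sum y
    have h2 : ∑ x ∈ F y ∩ K, (R.val x - 1) = ∑ x ∈ F y, (R.val x - 1) := by
      refine Finset.sum_subset Finset.inter_subset_left ?_
      intro x hx hnx
      have hnk : ¬ (2 ≤ R.val x) := fun h => hnx (Finset.mem_inter.mpr ⟨hx, (hmemK x).mpr h⟩)
      have := R.one_le_val x
      omega
    calc (F y).card + ∑ x ∈ F y ∩ K, (R.val x - 1)
        = ∑ x ∈ F y, 1 + ∑ x ∈ F y, (R.val x - 1) := by
          rw [Finset.card_eq_sum_ones, h2]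
      _ = ∑ x ∈ F y, (1 + (R.val x - 1)) := (Finset.sum_add_distrib).symm
      _ = ∑ x ∈ F y, R.val x := Finset.sum_congr rfl (fun x _ => by
          have := R.one_le_val x; omega)
      _ = d := h1
  -- per-fiber key inequality
  have hkey : ∀ y : Sphere, d ≤ (F y \ K).card + 2 * ∑ x ∈ F y ∩ K, (R.val x - 1) := by
    intro y
    have h1 := hcardval y
    have h2 : (F y ∩ K).card ≤ ∑ x ∈ F y ∩ K, (R.val x - 1) := by
      rw [Finset.card_eq_sum_ones]
      refine Finset.sum_le_sum ?_
      intro x hx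
      have := (hmemK x).mp (Finset.mem_inter.mp hx).2
      omega
    have h3 : (F y ∩ K).card + (F y \ K).card = (F y).card :=
      Finset.card_inter_add_card_sdiff (F y) K
    omega
  -- the noncritical preimage union
  have hdisjU : ∀ y ∈ Af, ∀ z ∈ Af, y ≠ z → Disjoint (F y \ K) (F z \ K) := by
    intro y _ z _ hyz
    refine Finset.disjoint_left.mpr ?_
    intro x hx hx'
    have h1 := (hmemF y x).mp (Finset.mem_sdiff.mp hx).1
    have h2 := (hmemF z x).mp (Finset.mem_sdiff.mp hx').1
    exact hyz (h1 ▸ h2 ▸ rfl)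
  have hdisjC : ∀ y ∈ Af, ∀ z ∈ Af, y ≠ z → Disjoint (F y ∩ K) (F z ∩ K) := by
    intro y _ z _ hyz
    refine Finset.disjoint_left.mpr ?_
    intro x hx hx'
    have h1 := (hmemF y x).mp (Finset.mem_inter.mp hx).1
    have h2 := (hmemF z x).mp (Finset.mem_inter.mp hx').1
    exact hyz (h1 ▸ h2 ▸ rfl)
  set U := Af.biUnion (fun y => F y \ K) with hUdef
  set CU := Af.biUnion (fun y => F y ∩ K) with hCUdef
  have hUcard : U.card = ∑ y ∈ Af, (F y \ K).card := Finset.card_biUnion hdisjU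
  have hCUsum : ∑ x ∈ CU, (R.val x - 1) = ∑ y ∈ Af, ∑ x ∈ F y ∩ K, (R.val x - 1) :=
    Finset.sum_biUnion (fun y hy z hz hyz => hdisjC y hy z hz hyz)
  set S := ∑ x ∈ CU, (R.val x - 1) with hSdef
  set N := Af.card with hNdef
  set M := U.card with hMdef
  -- main inequality  N * d ≤ M + 2 * S
  have hmain : N * d ≤ M + 2 * S := by
    have h1 : ∑ y ∈ Af, d ≤ ∑ y ∈ Af, ((F y \ K).card + 2 * ∑ x ∈ F y ∩ K, (R.val x - 1)) :=
      Finset.sum_le_sum (fun y _ => hkey y)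
    have h2 : ∑ y ∈ Af, d = N * d := by
      rw [Finset.sum_const, smul_eq_mul]
    have h3 : ∑ y ∈ Af, ((F y \ K).card + 2 * ∑ x ∈ F y ∩ K, (R.val x - 1))
        = M + 2 * S := by
      rw [Finset.sum_add_distrib, ← hUcard, ← Finset.mul_sum, ← hCUsum]
    omega
  -- infinity is critical and not in any relevant fiber
  have hinfK : (OnePoint.infty : Sphere) ∈ K := (hmemK _).mpr (by omega)
  have hCUsub : CU ⊆ K.erase (OnePoint.infty : Sphere) := by
    intro x hx
    obtain ⟨y, hy, hxy⟩ := Finset.mem_biUnion.mp hx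
    obtain ⟨hxF, hxK⟩ := Finset.mem_inter.mp hxy
    refine Finset.mem_erase.mpr ⟨?_, hxK⟩
    intro hxeq
    have : R.toFun x = y := (hmemF y x).mp hxF
    rw [hxeq, hfix] at this
    exact hplane (this ▸ (hmemA y).mp hy)
  -- Riemann-Hurwitz: finite ramification ≤ d - 1
  have hS : S + 1 ≤ d := by
    have hrh : ∑ x ∈ K, (R.val x - 1) = 2 * d - 2 := R.riemann_hurwitz
    have herase : ∑ x ∈ K.erase (OnePoint.infty : Sphere), (R.val x - 1)
        + (R.val (OnePoint.infty : Sphere) - 1) = ∑ x ∈ K, (R.val x - 1) :=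
      Finset.sum_erase_add K _ hinfK
    have hSle : S ≤ ∑ x ∈ K.erase (OnePoint.infty : Sphere), (R.val x - 1) :=
      Finset.sum_le_sum_of_subset hCUsub
    rw [hvalinf] at herase
    omega
  -- U ⊆ Af
  have hUsub : U ⊆ Af := by
    intro x hx
    obtain ⟨y, hy, hxy⟩ := Finset.mem_biUnion.mp hx
    obtain ⟨hxF, hxK⟩ := Finset.mem_sdiff.mp hxy
    refine (hmemA x).mpr (hA ⟨?_, ?_⟩)
    · have h : R.toFun x = y := (hmemF y x).mp hxF
      simp only [Set.mem_preimage]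
      rw [h]
      exact (hmemA y).mp hy
    · intro hc
      exact hxK ((hmemK x).mpr hc)
  have hMN : M ≤ N := Finset.card_le_card hUsub
  have hncard : A.ncard = N := by
    rw [hNdef, hAfdef]
    exact Set.ncard_eq_toFinset_card A hfin
  obtain ⟨e, hde⟩ : ∃ e, d = e + 1 := ⟨d - 1, by omega⟩
  have hexp : N * (e + 1) = N * e + N := by ring
  constructor
  · -- first part : N ≤ 2
    rw [hncard]
    have h1 : N * e ≤ 2 * e := by
      have := hmain
      rw [hde, hexp] at this
      omega
    rcases Nat.eq_zero_or_pos e with he | he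
    · omega
    · exact Nat.le_of_mul_le_mul_right h1 he
  · -- second part
    rintro ⟨c, hcA, hcC⟩
    rw [hncard]
    have hcAf : c ∈ Af := (hmemA c).mpr hcA
    have hcK : c ∈ K := (hmemK c).mpr hcC
    have hUsub' : U ⊆ Af.erase c := by
      intro x hx
      refine Finset.mem_erase.mpr ⟨?_, hUsub hx⟩
      rintro rfl
      obtain ⟨y, hy, hxy⟩ := Finset.mem_biUnion.mp hx
      exact (Finset.mem_sdiff.mp hxy).2 hcK
    have hMN' : M + 1 ≤ N := by
      have h1 : M ≤ (Af.erase c).card := Finset.card_le_card hUsub'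
      have h2 : (Af.erase c).card = N - 1 := by
        rw [hNdef, Finset.card_erase_of_mem hcAf]
      have h3 : 1 ≤ N := Finset.card_pos.mpr ⟨c, hcAf⟩
      omega
    by_contra hN
    push_neg at hN
    have hN2 : 2 ≤ N := hN
    have h1 : N * e + 1 ≤ 2 * e := by
      have := hmain
      rw [hde, hexp] at this
      omega
    have h2 : 2 * e ≤ N * e := Nat.mul_le_mul_right e hN2
    have he1 : 1 ≤ e := by omega
    omega
end
end

section
/- Let R be a rational map of degree at least 2, X a totally R-invariant subset of the Riemann sphere which is locally compact in the subspace topology, Y a closed RO-invariant subset of X, and Y₀ the set obtained from Y by deleting its isolated points. Then Y₀ is totally R-invariant: R⁻¹(Y₀) = Y₀. -/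
open scoped Classical

noncomputable section

/-- Auxiliary: near a non-isolated point of `Y` we can find points of `Y` avoiding any
given finite set and distinct from the point itself, inside any open neighbourhood. -/
lemma exists_near_aux (Y : Set Sphere) {x : Sphere} (hx : x ∈ Y)
    (hni : ¬ IsIsolatedIn x Y) {F : Set Sphere} (hF : F.Finite)
    {U : Set Sphere} (hU : IsOpen U) (hxU : x ∈ U) :
    ∃ y, y ∈ U ∧ y ∈ Y ∧ y ≠ x ∧ y ∉ F := by
  have hU' : IsOpen (U \ (F \ {x})) :=
    hU.sdiff (hF.subset Set.diff_subset).isClosed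
  have hxU' : x ∈ U \ (F \ {x}) := ⟨hxU, fun h => h.2 rfl⟩
  have hne : (U \ (F \ {x})) ∩ Y ≠ {x} := fun h => hni ⟨_, hU', h⟩
  have hsub : {x} ⊆ (U \ (F \ {x})) ∩ Y := by
    intro z hz
    rcases hz with rfl
    exact ⟨hxU', hx⟩
  obtain ⟨y, hy, hyx⟩ : ∃ y ∈ (U \ (F \ {x})) ∩ Y, y ∉ ({x} : Set Sphere) := by
    by_contra h
    push_neg at h
    exact hne (Set.Subset.antisymm h hsub)
  have hyx' : y ≠ x := fun h => hyx (by simp [h])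
  refine ⟨y, hy.1.1, hy.2, hyx', fun hyF => hy.1.2 ⟨hyF, hyx'⟩⟩

/-- Auxiliary: a point of the ambient set `X` lying in the closure of `Y` belongs
to `Y`, when `Y` is closed in the subspace topology of `X`. -/
lemma mem_of_closure_aux {X Y : Set Sphere} (hYX : Y ⊆ X)
    (hYclosed : IsClosed ((fun x : X => (x : Sphere)) ⁻¹' Y))
    {x : Sphere} (hxX : x ∈ X) (hx : x ∈ closure Y) : x ∈ Y := by
  rw [isClosed_induced_iff] at hYclosed
  obtain ⟨C, hC, hCY⟩ := hYclosed
  have hYC : Y ⊆ C := by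
    intro y hy
    have : (⟨y, hYX hy⟩ : X) ∈ (fun x : X => (x : Sphere)) ⁻¹' Y := hy
    rw [← hCY] at this
    exact this
  have hxC : x ∈ C := (hC.closure_subset_iff.2 hYC) hx
  have : (⟨x, hxX⟩ : X) ∈ (fun x : X => (x : Sphere)) ⁻¹' C := hxC
  rw [hCY] at this
  exact this

lemma valIter_one_aux (R : RationalMap) (x : Sphere) : R.valIter 1 x = R.val x := by
  simp [RationalMap.valIter]

lemma valIter_zero_aux (R : RationalMap) (x : Sphere) : R.valIter 0 x = 1 := by
  simp [RationalMap.valIter]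

lemma mem_RO_image_aux (R : RationalMap) {y : Sphere} (h : R.val y = 1) :
    R.toFun y ∈ R.RO y :=
  ⟨0, 1, by simp, by simp [valIter_zero_aux, valIter_one_aux, h]⟩

lemma mem_RO_preimage_aux (R : RationalMap) {x y : Sphere} (hxy : R.toFun x = y)
    (h : R.val x = 1) : x ∈ R.RO y :=
  ⟨1, 0, by simp [hxy], by simp [valIter_zero_aux, valIter_one_aux, h]⟩

lemma val_eq_one_aux (R : RationalMap) {x : Sphere} (h : x ∉ R.Crit) : R.val x = 1 := by
  have h1 := R.one_le_val x
  have h2 : ¬ 2 ≤ R.val x := h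
  omega

/-- Let `X` be a totally `R`-invariant, locally compact (in the subspace
topology) subset of the sphere, `Y ⊆ X` a closed `RO`-invariant subset of `X`, and `Y₀`
the set obtained from `Y` by deleting its isolated points. Then `R⁻¹(Y₀) = Y₀`. -/
theorem stmt_6 (R : RationalMap) (X Y : Set Sphere)
    (hXinv : R.toFun ⁻¹' X = X) (hXlc : LocallyCompactSpace X)
    (hYX : Y ⊆ X)
    (hYclosed : IsClosed ((fun x : X => (x : Sphere)) ⁻¹' Y))
    (hYinv : R.ROInvariant Y) :
    R.toFun ⁻¹' (Y \ {x | IsIsolatedIn x Y}) = Y \ {x | IsIsolatedIn x Y} := by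
  have key : ∀ x : Sphere, x ∈ X →
      (∀ U : Set Sphere, IsOpen U → x ∈ U → ∃ y, y ∈ U ∧ y ∈ Y ∧ y ≠ x) →
      x ∈ Y \ {x | IsIsolatedIn x Y} := by
    intro x hxX hprop
    have hxY : x ∈ Y := by
      refine mem_of_closure_aux hYX hYclosed hxX ?_
      rw [mem_closure_iff]
      intro U hU hxU
      obtain ⟨y, hyU, hyY, _⟩ := hprop U hU hxU
      exact ⟨y, hyU, hyY⟩
    refine ⟨hxY, ?_⟩
    rintro ⟨U, hU, hUY⟩
    obtain ⟨y, hyU, hyY, hyx⟩ := hprop U hU (by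
      have : x ∈ U ∩ Y := hUY ▸ rfl
      exact this.1)
    have : y ∈ U ∩ Y := ⟨hyU, hyY⟩
    rw [hUY] at this
    exact hyx this
  ext x
  simp only [Set.mem_preimage]
  constructor
  · rintro ⟨hfxY, hfxni⟩
    have hxX : x ∈ X := by
      rw [← hXinv]
      exact hYX hfxY
    refine key x hxX ?_
    intro U hU hxU
    have hV : IsOpen (R.toFun '' U) := R.isOpenMap_toFun U hU
    have hfxV : R.toFun x ∈ R.toFun '' U := ⟨x, hxU, rfl⟩
    obtain ⟨y, hyV, hyY, hyne, hyF⟩ :=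
      exists_near_aux Y hfxY hfxni (R.crit_finite.image R.toFun) hV hfxV
    obtain ⟨x', hx'U, hx'y⟩ := hyV
    have hx'crit : x' ∉ R.Crit := fun h => hyF ⟨x', h, hx'y⟩
    have hx'Y : x' ∈ Y :=
      hYinv y hyY (mem_RO_preimage_aux R hx'y (val_eq_one_aux R hx'crit))
    have hx'x : x' ≠ x := fun h => hyne (by rw [← hx'y, h])
    exact ⟨x', hx'U, hx'Y, hx'x⟩
  · rintro ⟨hxY, hxni⟩
    have hxX : x ∈ X := hYX hxY
    have hfxX : R.toFun x ∈ X := by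
      rw [← hXinv] at hxX
      exact hxX
    refine key (R.toFun x) hfxX ?_
    intro V hV hfxV
    have hU : IsOpen (R.toFun ⁻¹' V) := hV.preimage R.continuous_toFun
    have hF : (R.Crit ∪ R.toFun ⁻¹' {R.toFun x}).Finite :=
      R.crit_finite.union (R.finite_fiber (R.toFun x))
    obtain ⟨y, hyU, hyY, hyx, hyF⟩ := exists_near_aux Y hxY hxni hF hU hfxV
    have hycrit : y ∉ R.Crit := fun h => hyF (Or.inl h)
    have hfyY : R.toFun y ∈ Y :=
      hYinv y hyY (mem_RO_image_aux R (val_eq_one_aux R hycrit))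
    have hfyne : R.toFun y ≠ R.toFun x := fun h => hyF (Or.inr h)
    exact ⟨R.toFun y, hyU, hfyY, hfyne⟩
end
end

section
/- Let R be a rational map of degree at least 2 on the Riemann sphere. The total number of exposed points of R (points whose restricted orbit is finite) is at most 4. -/
open scoped Classical

noncomputable section

namespace RationalMap

variable (R : RationalMap)

lemma valIter_add' (a b : ℕ) (x : Sphere) :
    R.valIter (a + b) x = R.valIter a x * R.valIter b (R.toFun^[a] x) := by
  unfold valIter
  rw [Finset.prod_range_add]
  congr 1
  refine Finset.prod_congr rfl fun j _ => ?_
  rw [add_comm a j, Function.iterate_add_apply]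

lemma mem_RO_self (x : Sphere) : x ∈ R.RO x := ⟨0, 0, rfl, rfl⟩

lemma RO_trans {z y s : Sphere} (hzy : z ∈ R.RO y) (hys : y ∈ R.RO s) : z ∈ R.RO s := by
  obtain ⟨k, l, h1, h2⟩ := hzy
  obtain ⟨n, m, h3, h4⟩ := hys
  refine ⟨k + n, m + l, ?_, ?_⟩
  · rw [add_comm k n, Function.iterate_add_apply, h1, ← Function.iterate_add_apply,
      add_comm n l, Function.iterate_add_apply, h3, ← Function.iterate_add_apply,
      add_comm l m]
  · rw [valIter_add', h1, h2, ← valIter_add', add_comm l n, valIter_add', h3, h4,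
      ← valIter_add']

lemma mem_RO_of_preimage {y z : Sphere} (hz : R.toFun z = y) (hv : R.val z = 1) :
    z ∈ R.RO y := by
  refine ⟨1, 0, by simpa using hz, ?_⟩
  simp [valIter, hv]

lemma card_le_four (F : Finset Sphere)
    (hinv : ∀ y ∈ F, ∀ z : Sphere, R.toFun z = y → R.val z = 1 → z ∈ F) :
    F.card ≤ 4 := by
  classical
  set C : Finset Sphere := R.crit_finite.toFinset with hC
  set P : Finset Sphere := F.biUnion (fun y => (R.finite_fiber y).toFinset) with hP
  have hdisj : (↑F : Set Sphere).PairwiseDisjoint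
      (fun y => (R.finite_fiber y).toFinset) := by
    intro a _ b _ hab
    rw [Function.onFun, Finset.disjoint_left]
    intro x hxa hxb
    rw [Set.Finite.mem_toFinset, Set.mem_preimage, Set.mem_singleton_iff] at hxa hxb
    exact hab (by rw [← hxa, hxb])
  have hsum : ∑ x ∈ P, R.val x = R.deg * F.card := by
    rw [hP, Finset.sum_biUnion hdisj]
    rw [Finset.sum_congr rfl fun y _ => R.val_sum y, Finset.sum_const, smul_eq_mul,
      mul_comm]
  have h3 : ∑ x ∈ P, R.val x = P.card + ∑ x ∈ P, (R.val x - 1) := by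
    rw [Finset.card_eq_sum_ones, ← Finset.sum_add_distrib]
    exact Finset.sum_congr rfl fun x _ => by have := R.one_le_val x; omega
  have h4 : ∑ x ∈ P, (R.val x - 1) ≤ 2 * R.deg - 2 := by
    rw [← R.riemann_hurwitz]
    calc ∑ x ∈ P, (R.val x - 1)
        = ∑ x ∈ P.filter (fun x => 2 ≤ R.val x), (R.val x - 1) := by
          refine (Finset.sum_filter_of_ne fun x _ hx => ?_).symm
          have := R.one_le_val x; omega
      _ ≤ ∑ x ∈ R.crit_finite.toFinset, (R.val x - 1) := by
          refine Finset.sum_le_sum_of_subset fun x hx => ?_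
          rw [Finset.mem_filter] at hx
          exact R.crit_finite.mem_toFinset.mpr hx.2
  have h6 : C.card ≤ 2 * R.deg - 2 := by
    rw [← R.riemann_hurwitz, ← hC, Finset.card_eq_sum_ones]
    refine Finset.sum_le_sum fun x hx => ?_
    have : 2 ≤ R.val x := R.crit_finite.mem_toFinset.mp hx
    omega
  have h5 : P ⊆ F ∪ C := by
    intro x hx
    rw [hP, Finset.mem_biUnion] at hx
    obtain ⟨y, hy, hxy⟩ := hx
    rw [Set.Finite.mem_toFinset, Set.mem_preimage, Set.mem_singleton_iff] at hxy
    by_cases hv : R.val x = 1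
    · exact Finset.mem_union_left _ (hinv y hy x hxy hv)
    · refine Finset.mem_union_right _ (R.crit_finite.mem_toFinset.mpr ?_)
      have := R.one_le_val x
      show 2 ≤ R.val x
      omega
  have hPcard : P.card ≤ F.card + C.card :=
    (Finset.card_le_card h5).trans (Finset.card_union_le F C)
  have hd : 2 ≤ R.deg := R.two_le_deg
  have key : R.deg * F.card + 4 ≤ F.card + 4 * R.deg := by omega
  obtain ⟨e, he⟩ : ∃ e, R.deg = 2 + e := ⟨R.deg - 2, by omega⟩
  rw [he, add_mul] at key
  by_contra hcon
  push_neg at hcon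
  have hm : e * 5 ≤ e * F.card := Nat.mul_le_mul_left e (by omega)
  generalize e * F.card = m at key hm
  omega

end RationalMap

/-- The set of exposed points of `R` (points whose restricted orbit is finite)
is finite with at most 4 elements. -/
theorem stmt_8 (R : RationalMap) :
    {x : Sphere | (R.RO x).Finite}.Finite ∧ {x : Sphere | (R.RO x).Finite}.ncard ≤ 4 := by
  classical
  have hfin : ∀ S : Finset Sphere, ↑S ⊆ {x : Sphere | (R.RO x).Finite} → S.card ≤ 4 := by
    intro S hS
    have hFfin : (⋃ s ∈ (↑S : Set Sphere), R.RO s).Finite :=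
      Set.Finite.biUnion S.finite_toSet (fun s hs => hS hs)
    have hinv : ∀ y ∈ hFfin.toFinset, ∀ z : Sphere,
        R.toFun z = y → R.val z = 1 → z ∈ hFfin.toFinset := by
      intro y hy z hz hv
      rw [Set.Finite.mem_toFinset] at hy ⊢
      simp only [Set.mem_iUnion] at hy ⊢
      obtain ⟨s, hs, hys⟩ := hy
      exact ⟨s, hs, R.RO_trans (R.mem_RO_of_preimage hz hv) hys⟩
    have hsub : S ⊆ hFfin.toFinset := by
      intro s hs
      rw [Set.Finite.mem_toFinset]
      simp only [Set.mem_iUnion]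
      exact ⟨s, hs, R.mem_RO_self s⟩
    exact (Finset.card_le_card hsub).trans (R.card_le_four _ hinv)
  have hEfin : {x : Sphere | (R.RO x).Finite}.Finite := by
    by_contra h
    have hinf : {x : Sphere | (R.RO x).Finite}.Infinite := h
    obtain ⟨S, hSsub, hScard⟩ := hinf.exists_subset_card_eq 5
    have := hfin S hSsub
    omega
  refine ⟨hEfin, ?_⟩
  have := hfin hEfin.toFinset (by rw [Set.Finite.coe_toFinset])
  rwa [← Set.ncard_eq_toFinset_card _ hEfin] at this
end
end

section
/- Let G be a second countable locally compact Hausdorff étale groupoid. Suppose that for every compact subset K of the unit space G⁽⁰⁾ there exists a finite collection U₁,…,U_N of open bisections of G such that (i) K ⊆ ⋃ᵢ s(Uᵢ), (ii) r(Uᵢ) ∩ r(Uⱼ) = ∅ for i ≠ j, and (iii) K ∩ ⋃ᵢ r(Uᵢ) = ∅. Then the reduced groupoid C*-algebra C*_r(G) is stable, i.e. C*_r(G) ⊗ 𝒦 ≅ C*_r(G). -/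
open scoped Classical

noncomputable section

/-- An étale groupoid structure on a topological space `G`. The range and source maps
`r, s : G → G` take values in the unit space (the common image of `r` and `s`), the
partially defined multiplication `mul g h` is defined when `s g = r h`, and both `r` and
`s` are local homeomorphisms (the étale condition). -/
structure EtaleGroupoid (G : Type) [TopologicalSpace G] where
  r : G → G
  s : G → G
  inv : G → G
  mul : (g h : G) → s g = r h → G
  continuous_r : Continuous r
  continuous_s : Continuous s
  continuous_inv : Continuous inv
  etale_r : IsLocalHomeomorph r
  etale_s : IsLocalHomeomorph s
  r_r : ∀ g, r (r g) = r g
  s_r : ∀ g, s (r g) = r g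
  r_s : ∀ g, r (s g) = s g
  s_s : ∀ g, s (s g) = s g
  r_mul : ∀ g h hgh, r (mul g h hgh) = r g
  s_mul : ∀ g h hgh, s (mul g h hgh) = s h
  r_inv : ∀ g, r (inv g) = s g
  s_inv : ∀ g, s (inv g) = r g
  inv_inv : ∀ g, inv (inv g) = g
  unit_mul : ∀ g, mul (r g) g (s_r g) = g
  mul_unit : ∀ g, mul g (s g) (r_s g).symm = g
  inv_mul : ∀ g, mul (inv g) g (s_inv g) = s g
  mul_inv : ∀ g, mul g (inv g) (r_inv g).symm = r g
  mul_assoc : ∀ g h k (hgh : s g = r h) (hhk : s h = r k),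
    mul (mul g h hgh) k (by rw [s_mul]; exact hhk) =
      mul g (mul h k hhk) (by rw [r_mul]; exact hgh)

namespace EtaleGroupoid

variable {G : Type} [TopologicalSpace G] (𝒢 : EtaleGroupoid G)

/-- The unit space `G⁽⁰⁾` of the groupoid. -/
def units : Set G := Set.range 𝒢.r

/-- An open bisection: an open set on which both `r` and `s` are injective. -/
def IsBisection (U : Set G) : Prop :=
  IsOpen U ∧ Set.InjOn 𝒢.r U ∧ Set.InjOn 𝒢.s U

/-- The convolution product of two compactly supported functions on an étale groupoid:
`(f₁ f₂)(g) = ∑_{h ∈ G^{r(g)}} f₁(h) f₂(h⁻¹ g)`. -/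
def conv (f₁ f₂ : G → ℂ) : G → ℂ := fun g =>
  ∑ᶠ h : {h : G // 𝒢.r h = 𝒢.r g},
    f₁ h.1 * f₂ (𝒢.mul (𝒢.inv h.1) g (by rw [𝒢.s_inv]; exact h.2))

/-- The involution `f*(g) = conj (f (g⁻¹))` on functions on the groupoid. -/
def starFun (f : G → ℂ) : G → ℂ := fun g => starRingEnd ℂ (f (𝒢.inv g))

end EtaleGroupoid

/-- The continuous compactly supported functions on the groupoid. -/
def Cc {G : Type} [TopologicalSpace G] (f : G → ℂ) : Prop :=
  Continuous f ∧ HasCompactSupport f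

/-- Data realising a C*-algebra `A` as the reduced groupoid C*-algebra `C*_r(G)` of an
étale groupoid: an injective map `j` from the continuous compactly supported functions
on `G` into `A` which is linear, intertwines convolution with the product and the
canonical involution with the star operation, and has dense linear span. -/
structure ReducedGroupoidCstar {G : Type} [TopologicalSpace G] (𝒢 : EtaleGroupoid G)
    (A : Type) [NonUnitalCStarAlgebra A] where
  j : (G → ℂ) → A
  j_add : ∀ f g, Cc f → Cc g → j (f + g) = j f + j g
  j_smul : ∀ (c : ℂ) f, Cc f → j (c • f) = c • j f
  j_mul : ∀ f g, Cc f → Cc g → j (𝒢.conv f g) = j f * j g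
  j_star : ∀ f, Cc f → j (𝒢.starFun f) = star (j f)
  j_injOn : Set.InjOn j {f | Cc f}
  j_dense : closure (Submodule.span ℂ (j '' {f | Cc f}) : Set A) = Set.univ

/-- A C*-algebra is stable when `A ⊗ 𝒦 ≅ A`.  For σ-unital (in particular separable)
C*-algebras this is equivalent, by the theorem of Hjelmborg and Rørdam, to the condition
formalised here: for every positive element `a` and `ε > 0` there is `v` with
`‖v*v − a‖ ≤ ε` and `v² = 0`. -/
def IsStableCStar (A : Type) [NonUnitalCStarAlgebra A] : Prop :=
  ∀ a : A, (∃ b : A, a = star b * b) → ∀ ε : ℝ, 0 < ε →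
    ∃ v : A, ‖star v * v - a‖ ≤ ε ∧ v * v = 0

section StableAux

variable {G : Type} [TopologicalSpace G] (𝒢 : EtaleGroupoid G)

private lemma mul_congr_right {a b c : G} (hbc : b = c) (h : 𝒢.s a = 𝒢.r b) :
    𝒢.mul a b h = 𝒢.mul a c (hbc ▸ h) := by subst hbc; rfl

private lemma mul_congr_left {a b g : G} (hab : a = b) (h : 𝒢.s a = 𝒢.r g) :
    𝒢.mul a g h = 𝒢.mul b g (hab ▸ h) := by subst hab; rfl

private lemma mul_eq_self_left {a g : G} (ha : a = 𝒢.r g) (h : 𝒢.s a = 𝒢.r g) :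
    𝒢.mul a g h = g := by subst ha; exact 𝒢.unit_mul g

private lemma inv_unit (x : G) : 𝒢.inv (𝒢.r x) = 𝒢.r x := by
  have e : 𝒢.s (𝒢.inv (𝒢.r x)) = 𝒢.r x := by rw [𝒢.s_inv, 𝒢.r_r]
  calc 𝒢.inv (𝒢.r x)
      = 𝒢.mul (𝒢.inv (𝒢.r x)) (𝒢.s (𝒢.inv (𝒢.r x))) (𝒢.r_s (𝒢.inv (𝒢.r x))).symm :=
        (𝒢.mul_unit _).symm
    _ = 𝒢.mul (𝒢.inv (𝒢.r x)) (𝒢.r x) (by rw [e, 𝒢.r_r]) :=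
        mul_congr_right 𝒢 e _
    _ = 𝒢.s (𝒢.r x) := 𝒢.inv_mul (𝒢.r x)
    _ = 𝒢.r x := 𝒢.s_r x

private lemma eq_unit_of_mul_eq {h g : G} (hrg : 𝒢.r h = 𝒢.r g)
    (p : 𝒢.s (𝒢.inv h) = 𝒢.r g)
    (heq : 𝒢.mul (𝒢.inv h) g p = 𝒢.inv h) : g = 𝒢.r h := by
  have q : 𝒢.s h = 𝒢.r (𝒢.mul (𝒢.inv h) g p) := by rw [𝒢.r_mul, 𝒢.r_inv]
  have assoc := 𝒢.mul_assoc h (𝒢.inv h) g (𝒢.r_inv h).symm p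
  have e1 : 𝒢.mul h (𝒢.mul (𝒢.inv h) g p) q = 𝒢.r h := by
    rw [mul_congr_right 𝒢 heq]; exact 𝒢.mul_inv h
  have e2 : 𝒢.mul (𝒢.mul h (𝒢.inv h) (𝒢.r_inv h).symm) g (by rw [𝒢.s_mul]; exact p) = g := by
    apply mul_eq_self_left
    rw [𝒢.mul_inv, hrg]
  exact e2.symm.trans (assoc.trans e1)

private lemma mem_units_s (x : G) : 𝒢.s x ∈ 𝒢.units := ⟨𝒢.inv x, 𝒢.r_inv x⟩

private lemma unit_eq_r {h : G} (hu : h ∈ 𝒢.units) : 𝒢.r h = h := by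
  obtain ⟨x, rfl⟩ := hu; exact 𝒢.r_r x

/-- The canonical function supported in a bisection `U` implementing the square root of a
partition-of-unity function `φ`. -/
private noncomputable def theta (U : Set G) (φ : G → ℝ) : G → ℂ :=
  fun g => if g ∈ U then (Real.sqrt (φ (𝒢.s g)) : ℂ) else 0

private lemma theta_ne_zero {U : Set G} {φ : G → ℝ} {g : G} (h : theta 𝒢 U φ g ≠ 0) :
    g ∈ U ∧ φ (𝒢.s g) ≠ 0 := by
  by_cases hg : g ∈ U
  · refine ⟨hg, fun h0 => h ?_⟩
    simp [theta, hg, h0]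
  · exact absurd (by simp [theta, hg]) h

private lemma starFun_theta_ne_zero {U : Set G} {φ : G → ℝ} {g : G}
    (h : 𝒢.starFun (theta 𝒢 U φ) g ≠ 0) : 𝒢.inv g ∈ U ∧ φ (𝒢.s (𝒢.inv g)) ≠ 0 := by
  apply theta_ne_zero 𝒢
  intro h0
  exact h (by simp [EtaleGroupoid.starFun, h0])

/-- Value of the convolution when the left factor is supported on units. -/
private lemma conv_unit_left (u f : G → ℂ) (hu : ∀ g, u g ≠ 0 → g ∈ 𝒢.units) (g : G) :
    𝒢.conv u f g = u (𝒢.r g) * f g := by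
  have key := finsum_eq_single
    (fun h : {h : G // 𝒢.r h = 𝒢.r g} =>
      u h.1 * f (𝒢.mul (𝒢.inv h.1) g (by rw [𝒢.s_inv]; exact h.2)))
    (⟨𝒢.r g, 𝒢.r_r g⟩ : {h : G // 𝒢.r h = 𝒢.r g})
    (by
      rintro ⟨h, hh⟩ hne
      by_cases h0 : u h = 0
      · simp [h0]
      · exact absurd (Subtype.ext ((unit_eq_r 𝒢 (hu h h0)).symm.trans hh)) hne)
  show (∑ᶠ _, _) = _
  rw [key]
  exact congrArg (fun z => u (𝒢.r g) * f z)
    (mul_eq_self_left 𝒢 (inv_unit 𝒢 g) (by rw [𝒢.s_inv]; exact 𝒢.r_r g))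

private lemma conv_starFun_theta_self {U : Set G} {φ : G → ℝ} (hU : 𝒢.IsBisection U)
    (hφ0 : ∀ x, 0 ≤ φ x) (hsupp : Function.support φ ⊆ 𝒢.s '' U) (g : G) :
    𝒢.conv (𝒢.starFun (theta 𝒢 U φ)) (theta 𝒢 U φ) g = (φ g : ℂ) := by
  by_cases hg : ∃ k ∈ U, 𝒢.s k = g
  · obtain ⟨k, hkU, rfl⟩ := hg
    have pr : 𝒢.r (𝒢.inv k) = 𝒢.r (𝒢.s k) := by rw [𝒢.r_inv, 𝒢.r_s]
    have a₀ : {h : G // 𝒢.r h = 𝒢.r (𝒢.s k)} := ⟨𝒢.inv k, pr⟩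
    have key := finsum_eq_single
      (fun h : {h : G // 𝒢.r h = 𝒢.r (𝒢.s k)} =>
        𝒢.starFun (theta 𝒢 U φ) h.1 *
          theta 𝒢 U φ (𝒢.mul (𝒢.inv h.1) (𝒢.s k) (by rw [𝒢.s_inv]; exact h.2)))
      (⟨𝒢.inv k, pr⟩ : {h : G // 𝒢.r h = 𝒢.r (𝒢.s k)})
      (by
        rintro ⟨h, hh⟩ hne
        by_contra hF
        have h2 : 𝒢.inv h ∈ U := (starFun_theta_ne_zero 𝒢 (left_ne_zero_of_mul hF)).1
        have hs : 𝒢.s (𝒢.inv h) = 𝒢.s k := by rw [𝒢.s_inv, hh, 𝒢.r_s]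
        have hk : 𝒢.inv h = k := hU.2.2 h2 hkU hs
        exact hne (Subtype.ext (show h = 𝒢.inv k by rw [← 𝒢.inv_inv h, hk])))
    show (∑ᶠ _, _) = _
    rw [key]
    have e1 : 𝒢.mul (𝒢.inv (𝒢.inv k)) (𝒢.s k) (by rw [𝒢.s_inv]; exact pr) = k := by
      have h2 := mul_congr_left 𝒢 (𝒢.inv_inv k)
        (show 𝒢.s (𝒢.inv (𝒢.inv k)) = 𝒢.r (𝒢.s k) by rw [𝒢.s_inv]; exact pr)
      exact h2.trans (𝒢.mul_unit k)
    calc 𝒢.starFun (theta 𝒢 U φ) (𝒢.inv k) *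
          theta 𝒢 U φ (𝒢.mul (𝒢.inv (𝒢.inv k)) (𝒢.s k) _)
        = 𝒢.starFun (theta 𝒢 U φ) (𝒢.inv k) * theta 𝒢 U φ k := by rw [e1]
      _ = (φ (𝒢.s k) : ℂ) := by
          simp only [EtaleGroupoid.starFun, 𝒢.inv_inv, theta, if_pos hkU,
            Complex.conj_ofReal]
          rw [← Complex.ofReal_mul, Real.mul_self_sqrt (hφ0 _)]
  · push_neg at hg
    have hφg : φ g = 0 := by
      by_contra h0
      obtain ⟨k, hkU, hk⟩ := hsupp h0
      exact hg k hkU hk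
    rw [hφg, Complex.ofReal_zero]
    apply finsum_eq_zero_of_forall_eq_zero
    rintro ⟨h, hh⟩
    by_contra hF
    have h2 : 𝒢.inv h ∈ U := (starFun_theta_ne_zero 𝒢 (left_ne_zero_of_mul hF)).1
    have h3 : 𝒢.mul (𝒢.inv h) g (by rw [𝒢.s_inv]; exact hh) ∈ U :=
      (theta_ne_zero 𝒢 (right_ne_zero_of_mul hF)).1
    have hr : 𝒢.r (𝒢.mul (𝒢.inv h) g (by rw [𝒢.s_inv]; exact hh)) = 𝒢.r (𝒢.inv h) :=
      𝒢.r_mul _ _ _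
    have hme : 𝒢.mul (𝒢.inv h) g (by rw [𝒢.s_inv]; exact hh) = 𝒢.inv h :=
      hU.2.1 h3 h2 hr
    have hgr : g = 𝒢.r h := eq_unit_of_mul_eq 𝒢 hh _ hme
    exact hg (𝒢.inv h) h2 (by rw [𝒢.s_inv, ← hgr])

private lemma conv_starFun_theta_cross {U V : Set G} {φ ψ : G → ℝ}
    (hdisj : Disjoint (𝒢.r '' U) (𝒢.r '' V)) (g : G) :
    𝒢.conv (𝒢.starFun (theta 𝒢 U φ)) (theta 𝒢 V ψ) g = 0 := by
  apply finsum_eq_zero_of_forall_eq_zero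
  rintro ⟨h, hh⟩
  by_contra hF
  have h2 : 𝒢.inv h ∈ U := (starFun_theta_ne_zero 𝒢 (left_ne_zero_of_mul hF)).1
  have h3 : 𝒢.mul (𝒢.inv h) g (by rw [𝒢.s_inv]; exact hh) ∈ V :=
    (theta_ne_zero 𝒢 (right_ne_zero_of_mul hF)).1
  have m1 : 𝒢.s h ∈ 𝒢.r '' U := ⟨𝒢.inv h, h2, 𝒢.r_inv h⟩
  have m2 : 𝒢.s h ∈ 𝒢.r '' V :=
    ⟨𝒢.mul (𝒢.inv h) g (by rw [𝒢.s_inv]; exact hh), h3, by rw [𝒢.r_mul, 𝒢.r_inv]⟩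
  exact Set.disjoint_left.mp hdisj m1 m2

private lemma conv_f_theta_eq_zero {f : G → ℂ} {U : Set G} {φ : G → ℝ}
    (hdisj : Disjoint (𝒢.s '' Function.support f) (𝒢.r '' U)) (g : G) :
    𝒢.conv f (theta 𝒢 U φ) g = 0 := by
  apply finsum_eq_zero_of_forall_eq_zero
  rintro ⟨h, hh⟩
  by_contra hF
  have h1 : f h ≠ 0 := left_ne_zero_of_mul hF
  have h3 : 𝒢.mul (𝒢.inv h) g (by rw [𝒢.s_inv]; exact hh) ∈ U :=
    (theta_ne_zero 𝒢 (right_ne_zero_of_mul hF)).1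
  exact Set.disjoint_left.mp hdisj ⟨h, h1, rfl⟩
    ⟨𝒢.mul (𝒢.inv h) g (by rw [𝒢.s_inv]; exact hh), h3, by rw [𝒢.r_mul, 𝒢.r_inv]⟩

private lemma Cc_zero [T2Space G] : Cc (0 : G → ℂ) :=
  ⟨continuous_const, HasCompactSupport.intro isCompact_empty (fun _ _ => rfl)⟩

private lemma Cc_add {f g : G → ℂ} (hf : Cc f) (hg : Cc g) : Cc (f + g) :=
  ⟨hf.1.add hg.1, hf.2.add hg.2⟩

private lemma Cc_smul (c : ℂ) {f : G → ℂ} (hf : Cc f) : Cc (c • f) :=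
  ⟨hf.1.const_smul c, hf.2.smul_left⟩

private lemma Cc_sum [T2Space G] {ι : Type} [DecidableEq ι] (s : Finset ι) (F : ι → G → ℂ)
    (hF : ∀ i, Cc (F i)) : Cc (∑ i ∈ s, F i) := by
  induction s using Finset.induction with
  | empty => simpa using Cc_zero
  | insert _ _ hni ih => rw [Finset.sum_insert hni]; exact Cc_add (hF _) ih

private lemma Cc_starFun [T2Space G] {θ : G → ℂ} (hθ : Cc θ) : Cc (𝒢.starFun θ) := by
  constructor
  · exact continuous_star.comp (hθ.1.comp 𝒢.continuous_inv)
  · apply HasCompactSupport.intro (hθ.2.image 𝒢.continuous_inv)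
    intro x hx
    by_contra h0
    have h1 : θ (𝒢.inv x) ≠ 0 := by
      intro h2; exact h0 (by simp [EtaleGroupoid.starFun, h2])
    exact hx ⟨𝒢.inv x, subset_closure h1, 𝒢.inv_inv x⟩

private lemma theta_Cc [T2Space G] {U : Set G} {φ : G → ℝ} (hU : 𝒢.IsBisection U)
    (hφ : Continuous φ) (hφc : HasCompactSupport φ) (hsupp : tsupport φ ⊆ 𝒢.s '' U) :
    Cc (theta 𝒢 U φ) := by
  have hopen : IsOpen U := hU.1
  set F : U → G := fun x => 𝒢.s x.1 with hF
  have hFemb : Topology.IsOpenEmbedding F := by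
    apply Topology.IsOpenEmbedding.of_continuous_injective_isOpenMap
    · exact 𝒢.continuous_s.comp continuous_subtype_val
    · intro x y hxy
      exact Subtype.ext (hU.2.2 x.2 y.2 hxy)
    · intro V hV
      have h1 : F '' V = 𝒢.s '' (Subtype.val '' V) := by
        rw [Set.image_image]
      rw [h1]
      exact 𝒢.etale_s.isOpenMap _ (hopen.isOpenMap_subtype_val V hV)
  have hrange : Set.range F = 𝒢.s '' U := by
    rw [hF]
    rw [show (fun x : U => 𝒢.s x.1) = 𝒢.s ∘ Subtype.val from rfl, Set.range_comp,
      Subtype.range_coe]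
  have hpre : IsCompact (F ⁻¹' tsupport φ) :=
    hFemb.isInducing.isCompact_preimage' hφc (by rw [hrange]; exact hsupp)
  have hC : IsCompact (Subtype.val '' (F ⁻¹' tsupport φ)) :=
    hpre.image continuous_subtype_val
  have hsub : ∀ g, theta 𝒢 U φ g ≠ 0 → g ∈ Subtype.val '' (F ⁻¹' tsupport φ) := by
    intro g hg
    obtain ⟨hgU, hφg⟩ := theta_ne_zero 𝒢 hg
    exact ⟨⟨g, hgU⟩, subset_closure hφg, rfl⟩
  constructor
  · rw [continuous_iff_continuousAt]
    intro g
    by_cases hgU : g ∈ U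
    · have hc : ContinuousAt (fun x => ((Real.sqrt (φ (𝒢.s x)) : ℝ) : ℂ)) g :=
        (Complex.continuous_ofReal.comp
          (Real.continuous_sqrt.comp (hφ.comp 𝒢.continuous_s))).continuousAt
      apply ContinuousAt.congr hc
      filter_upwards [hopen.mem_nhds hgU] with x hx
      simp [theta, hx]
    · have hgC : g ∉ Subtype.val '' (F ⁻¹' tsupport φ) := by
        rintro ⟨x, _, rfl⟩; exact hgU x.2
      apply ContinuousAt.congr (continuousAt_const (y := (0 : ℂ)))
      filter_upwards [hC.isClosed.isOpen_compl.mem_nhds hgC] with x hx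
      by_contra h0
      exact hx (hsub x (fun h1 => h0 h1.symm))
  · exact HasCompactSupport.intro hC (fun x hx => by
      by_contra h0; exact hx (hsub x h0))

private lemma j_sum [T2Space G] {A : Type} [NonUnitalCStarAlgebra A]
    (hA : ReducedGroupoidCstar 𝒢 A) {ι : Type} [DecidableEq ι] (s : Finset ι)
    (F : ι → G → ℂ) (hF : ∀ i, Cc (F i)) :
    hA.j (∑ i ∈ s, F i) = ∑ i ∈ s, hA.j (F i) := by
  have hj0 : hA.j 0 = 0 := by
    have h := hA.j_add 0 0 Cc_zero Cc_zero
    rw [add_zero] at h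
    exact (left_eq_add.mp h)
  induction s using Finset.induction with
  | empty => simpa using hj0
  | @insert a s hni ih =>
      rw [Finset.sum_insert hni, Finset.sum_insert hni,
        hA.j_add _ _ (hF a) (Cc_sum s F hF), ih]

end StableAux
/-- Let `G` be a second countable locally compact Hausdorff étale groupoid
such that for every compact `K ⊆ G⁽⁰⁾` there are finitely many open bisections `Uᵢ` with
`K ⊆ ⋃ᵢ s(Uᵢ)`, `r(Uᵢ) ∩ r(Uⱼ) = ∅` for `i ≠ j` and `K ∩ ⋃ᵢ r(Uᵢ) = ∅`. Then the
reduced groupoid C*-algebra `C*_r(G)` is stable, i.e. `C*_r(G) ⊗ 𝒦 ≅ C*_r(G)`. -/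
theorem stmt_12 (G : Type) [TopologicalSpace G] [T2Space G] [SecondCountableTopology G]
    [LocallyCompactSpace G] (𝒢 : EtaleGroupoid G)
    (A : Type) [NonUnitalCStarAlgebra A] (hA : ReducedGroupoidCstar 𝒢 A)
    (hbis : ∀ K : Set G, K ⊆ 𝒢.units → IsCompact K →
      ∃ (N : ℕ) (U : Fin N → Set G),
        (∀ i, 𝒢.IsBisection (U i)) ∧
        K ⊆ ⋃ i, 𝒢.s '' U i ∧
        (∀ i j, i ≠ j → Disjoint (𝒢.r '' U i) (𝒢.r '' U j)) ∧
        Disjoint K (⋃ i, 𝒢.r '' U i)) :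
    IsStableCStar A := by

  rintro a ⟨b, rfl⟩ ε hε
  classical
  have hj0 : hA.j 0 = 0 := by
    have h := hA.j_add 0 0 Cc_zero Cc_zero
    rw [add_zero] at h
    exact (left_eq_add.mp h)
  -- the image of the compactly supported functions is a `ℂ`-submodule, hence equal to
  -- its span, hence dense
  set S : Submodule ℂ A :=
    { carrier := hA.j '' {f | Cc f}
      add_mem' := by
        rintro x y ⟨f, hf, rfl⟩ ⟨g2, hg2, rfl⟩
        exact ⟨f + g2, Cc_add hf hg2, hA.j_add f g2 hf hg2⟩
      zero_mem' := ⟨0, Cc_zero, hj0⟩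
      smul_mem' := by
        rintro cc x ⟨f, hf, rfl⟩
        exact ⟨cc • f, Cc_smul cc hf, hA.j_smul cc f hf⟩ } with hSdef
  have hcl : closure (hA.j '' {f | Cc f}) = Set.univ := by
    have h1 : Submodule.span ℂ (hA.j '' {f | Cc f}) = S := Submodule.span_eq S
    rw [← hA.j_dense, h1]
    rfl
  have hb : b ∈ closure (hA.j '' {f | Cc f}) := by rw [hcl]; trivial
  have hden : (0:ℝ) < 2 * ‖b‖ + 2 := by positivity
  set δ : ℝ := min 1 (ε / (2 * ‖b‖ + 2)) with hδdef
  have hδpos : 0 < δ := lt_min one_pos (div_pos hε hden)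
  obtain ⟨y, hymem, hdist⟩ := Metric.mem_closure_iff.mp hb δ hδpos
  obtain ⟨f, hfCc, rfl⟩ := hymem
  -- the compact set `K` and the bisections
  have hLc : IsCompact (tsupport f) := hfCc.2
  set K : Set G := 𝒢.r '' tsupport f ∪ 𝒢.s '' tsupport f with hK
  have hKsub : K ⊆ 𝒢.units := by
    rintro x (⟨z, _, rfl⟩ | ⟨z, _, rfl⟩)
    · exact ⟨z, rfl⟩
    · exact mem_units_s 𝒢 z
  have hKc : IsCompact K := (hLc.image 𝒢.continuous_r).union (hLc.image 𝒢.continuous_s)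
  obtain ⟨N, U, hbisec, hcov, hrdisj, hKr⟩ := hbis K hKsub hKc
  have hsopen : ∀ i, IsOpen (𝒢.s '' U i) := fun i => 𝒢.etale_s.isOpenMap _ (hbisec i).1
  obtain ⟨φ, hφsupp, hφsum, hφ01, hφcomp⟩ :=
    exists_continuous_sum_one_of_isOpen_isCompact hsopen hKc hcov
  set θf : Fin N → G → ℂ := fun i => theta 𝒢 (U i) (φ i) with hθf
  have hθCc : ∀ i, Cc (θf i) := fun i =>
    theta_Cc 𝒢 (hbisec i) (φ i).continuous (hφcomp i) (hφsupp i)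
  set c : A := hA.j f with hc
  set t : A := ∑ i, hA.j (θf i) with ht
  -- `c * t = 0`
  have hct : c * t = 0 := by
    rw [ht, Finset.mul_sum]
    apply Finset.sum_eq_zero
    intro i _
    have h1 : 𝒢.conv f (θf i) = 0 := by
      funext g
      apply conv_f_theta_eq_zero
      refine Set.disjoint_left.mpr ?_
      rintro x ⟨h, hh, rfl⟩ hx2
      have hxK : 𝒢.s h ∈ K := Or.inr ⟨h, subset_closure hh, rfl⟩
      exact Set.disjoint_left.mp hKr hxK (Set.mem_iUnion.mpr ⟨i, hx2⟩)
    rw [hc, ← hA.j_mul f (θf i) hfCc (hθCc i), h1, hj0]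
  -- `star t * t = j u` where `u` is the (complexified) sum of the partition functions
  set u : G → ℂ := fun g => ((∑ i, φ i g : ℝ) : ℂ) with hu
  have husum : u = ∑ i : Fin N, (fun g => ((φ i g : ℝ) : ℂ)) := by
    funext g
    rw [Finset.sum_apply]
    show ((∑ i : Fin N, φ i g : ℝ) : ℂ) = ∑ i : Fin N, ((φ i g : ℝ) : ℂ)
    push_cast
    rfl
  have hFiCc : ∀ i : Fin N, Cc (fun g => ((φ i g : ℝ) : ℂ)) := fun i =>
    ⟨Complex.continuous_ofReal.comp (φ i).continuous,
     HasCompactSupport.intro (hφcomp i) (fun x hx => by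
       simp [image_eq_zero_of_notMem_tsupport hx])⟩
  have huCc : Cc u := by rw [husum]; exact Cc_sum Finset.univ _ hFiCc
  have htt : star t * t = hA.j u := by
    rw [ht, star_sum, Finset.sum_mul_sum]
    calc (∑ i, ∑ j', star (hA.j (θf i)) * hA.j (θf j'))
        = ∑ i : Fin N, hA.j (fun g => ((φ i g : ℝ) : ℂ)) := by
          apply Finset.sum_congr rfl
          intro i _
          rw [Finset.sum_eq_single_of_mem i (Finset.mem_univ i) ?off]
          case off =>
            intro j' _ hj'
            rw [← hA.j_star _ (hθCc i),
              ← hA.j_mul _ _ (Cc_starFun 𝒢 (hθCc i)) (hθCc j')]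
            have h2 : 𝒢.conv (𝒢.starFun (θf i)) (θf j') = 0 := by
              funext g
              exact conv_starFun_theta_cross 𝒢 (hrdisj i j' (Ne.symm hj')) g
            rw [h2, hj0]
          rw [← hA.j_star _ (hθCc i),
            ← hA.j_mul _ _ (Cc_starFun 𝒢 (hθCc i)) (hθCc i)]
          congr 1
          funext g
          exact conv_starFun_theta_self 𝒢 (hbisec i) (fun x => (hφ01 i x).1)
            (fun x hx => hφsupp i (subset_closure hx)) g
      _ = hA.j u := by rw [husum, j_sum 𝒢 hA Finset.univ _ hFiCc]
  have hu' : ∀ g, u g ≠ 0 → g ∈ 𝒢.units := by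
    intro g hg
    have h1 : ∑ i, φ i g ≠ 0 := by
      intro h; exact hg (by rw [hu]; simp only [h, Complex.ofReal_zero])
    obtain ⟨i, _, hi⟩ := Finset.exists_ne_zero_of_sum_ne_zero h1
    obtain ⟨k, _, hks⟩ := hφsupp i (subset_closure hi)
    rw [← hks]
    exact mem_units_s 𝒢 k
  have httc : star t * t * c = c := by
    rw [htt, hc, ← hA.j_mul u f huCc hfCc]
    congr 1
    funext g
    rw [conv_unit_left 𝒢 u f hu' g]
    by_cases hfg : f g = 0
    · rw [hfg, mul_zero]
    · have hrgK : 𝒢.r g ∈ K := Or.inl ⟨g, subset_closure hfg, rfl⟩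
      have h3 : ∑ i, φ i (𝒢.r g) = 1 := by
        have h4 := hφsum hrgK
        simpa using h4
      have h2 : u (𝒢.r g) = 1 := by
        rw [hu]
        simp only [h3, Complex.ofReal_one]
      rw [h2, one_mul]
  refine ⟨t * c, ?_, ?_⟩
  · -- the norm estimate
    have hsvv : star (t * c) * (t * c) = star c * c := by
      rw [star_mul, mul_assoc, ← mul_assoc (star t), httc]
    rw [hsvv]
    have hbc : ‖b - c‖ < δ := by rw [← dist_eq_norm]; exact hdist
    have hcb : ‖c - b‖ ≤ δ := by rw [norm_sub_rev]; exact hbc.le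
    have hδ1 : δ ≤ 1 := min_le_left _ _
    have hid : star c * c - star b * b = star c * (c - b) + (star c - star b) * b := by
      noncomm_ring
    have h2 : ‖star c * c - star b * b‖ ≤ ‖c‖ * ‖c - b‖ + ‖c - b‖ * ‖b‖ := by
      rw [hid]
      refine (norm_add_le _ _).trans (add_le_add ?_ ?_)
      · refine (norm_mul_le _ _).trans ?_
        rw [norm_star]
      · refine (norm_mul_le _ _).trans ?_
        rw [← star_sub, norm_star]
    have hcnorm : ‖c‖ ≤ ‖b‖ + 1 := by
      calc ‖c‖ = ‖(c - b) + b‖ := by rw [sub_add_cancel]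
        _ ≤ ‖c - b‖ + ‖b‖ := norm_add_le _ _
        _ ≤ ‖b‖ + 1 := by linarith
    have hδ2 : δ * (2 * ‖b‖ + 2) ≤ ε := by
      calc δ * (2 * ‖b‖ + 2) ≤ (ε / (2 * ‖b‖ + 2)) * (2 * ‖b‖ + 2) :=
            mul_le_mul_of_nonneg_right (min_le_right _ _) hden.le
        _ = ε := div_mul_cancel₀ _ (ne_of_gt hden)
    have e3 : ‖c‖ * ‖c - b‖ ≤ (‖b‖ + 1) * δ :=
      mul_le_mul hcnorm hcb (norm_nonneg _) (by positivity)
    have e4 : ‖c - b‖ * ‖b‖ ≤ δ * ‖b‖ := mul_le_mul_of_nonneg_right hcb (norm_nonneg b)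
    nlinarith [norm_nonneg b, hδpos.le]
  · -- squares to zero
    calc t * c * (t * c) = t * (c * t * c) := by rw [mul_assoc, ← mul_assoc c]
      _ = 0 := by rw [hct, zero_mul, mul_zero]
end
end
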